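/- Let 𝓗 be the space of triples of projective lines in ℝP³ with pairwise distinct intersection points, and let π: 𝓗 → Gr(3,ℝ⁴) be the continuous map sending a triple (ℓ₁,ℓ₂,ℓ₃) to its linear span ℓ₁ + ℓ₂ + ℓ₃ (a 3-dimensional subspace of ℝ⁴). Then π is a locally trivial fiber bundle: every point of Gr(3,ℝ⁴) has an open neighborhood U together with a homeomorphism π⁻¹(U) ≅ U × F commuting with the projections to U, where the fiber F is homeomorphic to the space 𝓗′ of triples of projective lines in ℝP² with pairwise distinct intersection points. -/

import Mathlib

open Module Matrix CategoryTheory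

noncomputable section

/-- `ℝ^m` with its Euclidean topology and inner product. -/
abbrev Euc (m : ℕ) : Type := EuclideanSpace ℝ (Fin m)

/-- The Grassmannian `Gr(k, ℝ^m)` of `k`-dimensional linear subspaces of `ℝ^m`. -/
def Gr (k m : ℕ) : Type :=
  { V : Submodule ℝ (Euc m) // finrank ℝ V = k }

/-- The standard topology on the Grassmannian, induced by sending a subspace to the
orthogonal projection onto it. -/
noncomputable instance (k m : ℕ) : TopologicalSpace (Gr k m) :=
  TopologicalSpace.induced
    (fun V : Gr k m =>
      (V.1.subtypeL.comp (Submodule.orthogonalProjectionOnto V.1) : Euc m →L[ℝ] Euc m))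
    inferInstance

/-- The condition that a triple of projective lines (i.e. 2-dimensional subspaces) has
pairwise distinct intersection points: each pairwise intersection is 1-dimensional, and
the three intersections are pairwise distinct. -/
def GoodTriple {m : ℕ} (p : Gr 2 m × Gr 2 m × Gr 2 m) : Prop :=
  finrank ℝ ↥(p.1.1 ⊓ p.2.1.1) = 1 ∧
  finrank ℝ ↥(p.1.1 ⊓ p.2.2.1) = 1 ∧
  finrank ℝ ↥(p.2.1.1 ⊓ p.2.2.1) = 1 ∧
  p.1.1 ⊓ p.2.1.1 ≠ p.1.1 ⊓ p.2.2.1 ∧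
  p.1.1 ⊓ p.2.1.1 ≠ p.2.1.1 ⊓ p.2.2.1 ∧
  p.1.1 ⊓ p.2.2.1 ≠ p.2.1.1 ⊓ p.2.2.1

/-- The space of triples of projective lines in `ℝP^{m-1}` with pairwise distinct
intersection points, as a subspace of `Gr(2,ℝ^m)³`. -/
def Triples (m : ℕ) : Type :=
  { p : Gr 2 m × Gr 2 m × Gr 2 m // GoodTriple p }

instance (m : ℕ) : TopologicalSpace (Triples m) :=
  inferInstanceAs (TopologicalSpace { p : Gr 2 m × Gr 2 m × Gr 2 m // GoodTriple p })

/-- The (partial) flag variety of flags of signature `(0,1,2,3,m)` in `ℝ^m`;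
for `m = 4` this is the complete flag variety `Flag(ℝ⁴)`. -/
def Flag123 (m : ℕ) : Type :=
  { v : Gr 1 m × Gr 2 m × Gr 3 m // v.1.1 ≤ v.2.1.1 ∧ v.2.1.1 ≤ v.2.2.1 }

instance (m : ℕ) : TopologicalSpace (Flag123 m) :=
  inferInstanceAs (TopologicalSpace
    { v : Gr 1 m × Gr 2 m × Gr 3 m // v.1.1 ≤ v.2.1.1 ∧ v.2.1.1 ≤ v.2.2.1 })

/-- The complete flag variety `Flag(ℝ³)`. -/
def FlagR3 : Type := { v : Gr 1 3 × Gr 2 3 // v.1.1 ≤ v.2.1 }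

instance : TopologicalSpace FlagR3 :=
  inferInstanceAs (TopologicalSpace { v : Gr 1 3 × Gr 2 3 // v.1.1 ≤ v.2.1 })

/-- The kernel of the linear functional `rᵢ(A) : ℝ^m → ℝ`, `x ↦ ∑ⱼ A i j * x j`,
given by the `i`-th row of `A`. -/
def rowKer {m : ℕ} (A : Matrix (Fin m) (Fin m) ℝ) (i : Fin m) : Submodule ℝ (Euc m) :=
  LinearMap.ker ((show Euc m →L[ℝ] ℝ from ∑ j : Fin m, A i j • (EuclideanSpace.proj j : Euc m →L[ℝ] ℝ)) : Euc m →ₗ[ℝ] ℝ)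

/-- The span of the first `k` columns of a matrix `A`, as a subspace of `ℝ^m`. -/
def colSpan {m : ℕ} (A : Matrix (Fin m) (Fin m) ℝ) (k : ℕ) : Submodule ℝ (Euc m) :=
  Submodule.span ℝ
    ((fun j : Fin m => (EuclideanSpace.equiv (Fin m) ℝ).symm (fun i => A i j)) ''
      { j : Fin m | (j : ℕ) < k })

/-- The product of diagonal matrices is diagonal. -/
theorem isDiag_mul' {n : ℕ} {A B : Matrix (Fin n) (Fin n) ℝ}
    (hA : A.IsDiag) (hB : B.IsDiag) : (A * B).IsDiag := by
  intro i j hij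
  rw [Matrix.mul_apply]
  refine Finset.sum_eq_zero fun k _ => ?_
  rcases eq_or_ne i k with rfl | hk
  · rw [hB hij, mul_zero]
  · rw [hA hk, zero_mul]

/-- The subgroup `T` of `GL(n,ℝ)` consisting of invertible diagonal matrices. -/
def diagGL (n : ℕ) : Subgroup (Matrix.GeneralLinearGroup (Fin n) ℝ) where
  carrier := { A | (A : Matrix (Fin n) (Fin n) ℝ).IsDiag }
  one_mem' := Matrix.isDiag_one
  mul_mem' := fun ha hb => isDiag_mul' ha hb
  inv_mem' := by
    intro A hA
    show ((A⁻¹ : Matrix.GeneralLinearGroup (Fin n) ℝ) : Matrix (Fin n) (Fin n) ℝ).IsDiag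
    rw [Matrix.coe_units_inv, ← Matrix.IsDiag.diagonal_diag hA, Matrix.inv_diagonal]
    exact Matrix.isDiag_diagonal _

/-- The orthogonal group `O(n)` of `n × n` real orthogonal matrices. -/
abbrev Orth (n : ℕ) := Matrix.orthogonalGroup (Fin n) ℝ

/-- The subgroup `T ∩ O(n)` of diagonal orthogonal matrices (diagonal entries `±1`). -/
def diagOrth (n : ℕ) : Subgroup ↥(Orth n) where
  carrier := { A | (A : Matrix (Fin n) (Fin n) ℝ).IsDiag }
  one_mem' := Matrix.isDiag_one
  mul_mem' := fun ha hb => isDiag_mul' ha hb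
  inv_mem' := by
    intro A hA
    show ((A⁻¹ : ↥(Orth n)) : Matrix (Fin n) (Fin n) ℝ).IsDiag
    rw [Matrix.UnitaryGroup.inv_val, Matrix.star_eq_conjTranspose]
    exact hA.conjTranspose

/-- `SO(n)`, as the subgroup of `O(n)` of matrices of determinant `1`. -/
def SOsub (n : ℕ) : Subgroup ↥(Orth n) where
  carrier := { A | (A : Matrix (Fin n) (Fin n) ℝ).det = 1 }
  one_mem' := by simp
  mul_mem' := by
    intro a b ha hb
    show ((a * b : ↥(Orth n)) : Matrix (Fin n) (Fin n) ℝ).det = 1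
    rw [Matrix.UnitaryGroup.mul_val, Matrix.det_mul, ha, hb, mul_one]
  inv_mem' := by
    intro A hA
    show ((A⁻¹ : ↥(Orth n)) : Matrix (Fin n) (Fin n) ℝ).det = 1
    rw [Matrix.UnitaryGroup.inv_val, Matrix.star_eq_conjTranspose, Matrix.det_conjTranspose]
    simpa using congrArg star hA

/-- The group `SO(n)` of `n × n` real orthogonal matrices of determinant `1`. -/
abbrev SO (n : ℕ) := ↥(SOsub n)

/-- The underlying matrix of an element of `SO(n)`. -/
def soMat {n : ℕ} (A : SO n) : Matrix (Fin n) (Fin n) ℝ :=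
  ((A : ↥(Orth n)) : Matrix (Fin n) (Fin n) ℝ)

/-- The subgroup `Kₙ` of `SO(n)` of diagonal matrices
(entries `±1`, determinant `1`). -/
def Kdiag (n : ℕ) : Subgroup (SO n) where
  carrier := { A | (soMat A).IsDiag }
  one_mem' := Matrix.isDiag_one
  mul_mem' := fun ha hb => isDiag_mul' ha hb
  inv_mem' := by
    intro A hA
    show (soMat A⁻¹).IsDiag
    have h : soMat A⁻¹ = star (soMat A) := rfl
    rw [h, Matrix.star_eq_conjTranspose]
    exact hA.conjTranspose

/-- The Borel subgroup `Bₙ` of `GL(n,ℝ)` of invertible upper-triangular matrices. -/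
def upperB (n : ℕ) : Subgroup (Matrix.GeneralLinearGroup (Fin n) ℝ) where
  carrier := { A | (A : Matrix (Fin n) (Fin n) ℝ).BlockTriangular id }
  one_mem' := Matrix.blockTriangular_one
  mul_mem' := fun ha hb => ha.mul hb
  inv_mem' := by
    intro A hA
    show ((A⁻¹ : Matrix.GeneralLinearGroup (Fin n) ℝ) :
      Matrix (Fin n) (Fin n) ℝ).BlockTriangular id
    rw [Matrix.coe_units_inv]
    haveI := A.invertible
    exact Matrix.blockTriangular_inv_of_blockTriangular hA

/-- The singular chain complex of a topological space: the free simplicial abelian group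
on the singular simplicial set, made into a chain complex via alternating face maps. -/
def singularChainComplex (X : Type) [TopologicalSpace X] : ChainComplex AddCommGrpCat ℕ :=
  (AlgebraicTopology.alternatingFaceMapComplex AddCommGrpCat).obj
    (((CategoryTheory.SimplicialObject.whiskering _ _).obj AddCommGrpCat.free).obj
      (TopCat.toSSet.obj (TopCat.of X)))

/-- The `k`-th integral singular homology group of a topological space. -/
def singularHomology (X : Type) [TopologicalSpace X] (k : ℕ) : AddCommGrpCat :=
  (singularChainComplex X).homology k

/-!
The span of a good triple `(ℓ₁, ℓ₂, ℓ₃)` is `ℓ₁ + ℓ₂`, which is 3-dimensional because `ℓ₁ ∩ ℓ₂` is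
a line, and it contains `ℓ₃` because `ℓ₃` is spanned by the two distinct lines `ℓ₁ ∩ ℓ₃` and
`ℓ₂ ∩ ℓ₃`. Near `b`, orthogonal projection onto `V` restricted to `b` is an isomorphism
`b ≅ V` depending continuously on `V`; composing it with a fixed `ℝ³ ≅ b` and pulling triples
in `V` back along it identifies the fibre over `V` with the good triples in `ℝ³`.

All continuity statements reduce to one fact: the orthogonal projection onto the range of a
continuously varying operator `S x` of constant rank varies continuously. Locally that range is
the range of `h x = S x` restricted to `(ker S x₀)ᗮ`, which is injective, and the projection onto
the range of an injective `h` is `h (h† h)⁻¹ h†`.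
-/

open Topology RCLike
open scoped InnerProduct

section LinearAlgebra

variable {K V W : Type*} [DivisionRing K] [AddCommGroup V] [Module K V] [AddCommGroup W]
  [Module K W]

theorem Submodule.finrank_map_of_injective {f : V →ₗ[K] W} (hf : Function.Injective f)
    (U : Submodule K V) : finrank K (U.map f) = finrank K U :=
  (LinearEquiv.finrank_eq (U.equivMapOfInjective f hf)).symm

theorem Submodule.finrank_comap_of_le_range {f : V →ₗ[K] W} (hf : Function.Injective f)
    {U : Submodule K W} (hU : U ≤ LinearMap.range f) : finrank K (U.comap f) = finrank K U := by
  conv_rhs => rw [← Submodule.map_comap_eq_self hU]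
  exact (Submodule.finrank_map_of_injective hf _).symm

theorem Submodule.map_eq_comap_of_leftInverse {f : V →ₗ[K] W} {g : W →ₗ[K] V}
    (hgf : Function.LeftInverse g f) {U : Submodule K W} (hU : U ≤ LinearMap.range f) :
    U.map g = U.comap f := by
  refine le_antisymm ?_ fun x hx => ⟨f x, hx, hgf x⟩
  rintro _ ⟨y, hy, rfl⟩
  obtain ⟨x, rfl⟩ := hU hy
  rwa [Submodule.mem_comap, hgf x]

theorem Submodule.sup_eq_of_finrank_eq_one [FiniteDimensional K V] {A B P : Submodule K V}
    (hA : finrank K A = 1) (hB : finrank K B = 1) (hAB : A ≠ B) (hAP : A ≤ P) (hBP : B ≤ P)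
    (hP : finrank K P = 2) : A ⊔ B = P := by
  have hinf : finrank K ↥(A ⊓ B) = 0 := by
    have hlt : A ⊓ B < A := inf_le_left.lt_of_ne fun h =>
      hAB (Submodule.eq_of_le_of_finrank_eq (inf_eq_left.mp h) (hA.trans hB.symm))
    have := Submodule.finrank_lt_finrank_of_lt hlt
    omega
  refine Submodule.eq_of_le_of_finrank_eq (sup_le hAP hBP) ?_
  have := Submodule.finrank_sup_add_finrank_inf_eq A B
  omega

end LinearAlgebra

theorem ContinuousWithinAt.ringInverse {R X : Type*} [NormedRing R] [HasSummableGeomSeries R]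
    [TopologicalSpace X] {f : X → R} {s : Set X} {x : X} (hf : ContinuousWithinAt f s x)
    (hx : IsUnit (f x)) : ContinuousWithinAt (fun y => Ring.inverse (f y)) s x := by
  have := NormedRing.inverse_continuousAt hx.unit
  rw [IsUnit.unit_spec] at this
  exact this.comp_continuousWithinAt hf

section RangeProjection

variable {𝕜 E F : Type*} [RCLike 𝕜]
  [NormedAddCommGroup E] [InnerProductSpace 𝕜 E] [FiniteDimensional 𝕜 E]
  [NormedAddCommGroup F] [InnerProductSpace 𝕜 F]

local notation "⟪" x ", " y "⟫" => inner 𝕜 x y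

theorem Submodule.mem_orthogonal_of_re_inner_starProjection_eq_zero (U : Submodule 𝕜 E)
    {y : E} (hy : re ⟪U.starProjection y, y⟫ = 0) : y ∈ Uᗮ := by
  rw [re_inner_starProjection_eq_normSq, sq_eq_zero_iff, norm_eq_zero] at hy
  rw [← U.starProjection_apply_eq_zero_iff, starProjection_apply, hy, ZeroMemClass.coe_zero]

theorem Submodule.range_starProjection_add_starProjection (U U' : Submodule 𝕜 E) :
    (U.starProjection + U'.starProjection).range = U ⊔ U' := by
  refine le_antisymm ?_ ?_
  · rintro _ ⟨x, rfl⟩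
    exact Submodule.add_mem_sup (U.starProjection_apply_mem x) (U'.starProjection_apply_mem x)
  · rw [← Submodule.orthogonal_le_orthogonal_iff, ← Submodule.inf_orthogonal]
    intro y hy
    have hsum : re ⟪U.starProjection y, y⟫ + re ⟪U'.starProjection y, y⟫ = 0 := by
      rw [← map_add, ← inner_add_left]
      simpa using congrArg re (hy _ ⟨y, rfl⟩)
    have hU := U.re_inner_starProjection_nonneg y
    have hU' := U'.re_inner_starProjection_nonneg y
    exact ⟨U.mem_orthogonal_of_re_inner_starProjection_eq_zero (by linarith),
      U'.mem_orthogonal_of_re_inner_starProjection_eq_zero (by linarith)⟩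

variable [CompleteSpace E] [CompleteSpace F]

namespace ContinuousLinearMap

theorem isUnit_adjoint_comp_self {h : E →L[𝕜] F} (hh : Function.Injective h) :
    IsUnit (h† ∘L h) := by
  have hinj : Function.Injective (h† ∘L h) := by
    rw [coe_comp]; exact (adjoint_comp_self_injective_iff h).mpr hh
  exact isUnit_iff_bijective.mpr ⟨hinj, LinearMap.injective_iff_surjective.mp hinj⟩

theorem starProjection_range {h : E →L[𝕜] F} (hh : Function.Injective h) :
    h.range.starProjection = h ∘L Ring.inverse (h† ∘L h) ∘L h† := by
  ext y
  refine Submodule.eq_starProjection_of_mem_of_inner_eq_zero ⟨_, rfl⟩ ?_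
  rintro _ ⟨x, rfl⟩
  have hcancel : (h† ∘L h) ∘L Ring.inverse (h† ∘L h) = 1 :=
    Ring.mul_inverse_cancel _ (isUnit_adjoint_comp_self hh)
  rw [coe_coe, ← adjoint_inner_left, map_sub]
  simp [← comp_apply (h†) h, ← comp_apply (h† ∘L h), hcancel]

end ContinuousLinearMap

variable {X : Type*} [TopologicalSpace X] {s : Set X} {d : ℕ}

theorem ContinuousOn.starProjection_range {S : X → E →L[𝕜] F} (hS : ContinuousOn S s)
    (hd : ∀ x ∈ s, finrank 𝕜 (S x).range = d) :
    ContinuousOn (fun x => (S x).range.starProjection) s := by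
  intro x₀ hx₀
  let U := (S x₀).kerᗮ
  have hU : finrank 𝕜 U = d := by
    have h₁ := (S x₀).finrank_range_add_finrank_ker
    have h₂ := (S x₀).ker.finrank_add_finrank_orthogonal
    have h₃ := hd x₀ hx₀
    show finrank 𝕜 (S x₀).kerᗮ = d
    omega
  let h : X → U →L[𝕜] F := fun x => S x ∘L U.subtypeL
  have hcont : ContinuousWithinAt h s x₀ := (hS x₀ hx₀).clm_comp continuousWithinAt_const
  have hinj₀ : Function.Injective (h x₀) := by
    refine (injective_iff_map_eq_zero _).mpr fun ⟨u, hu⟩ hker => ?_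
    have : u ∈ (S x₀).ker ⊓ U := ⟨hker, hu⟩
    rw [Submodule.inf_orthogonal_eq_bot] at this
    exact Subtype.ext this
  have hinj : ∀ᶠ x in 𝓝[s] x₀, Function.Injective (h x) :=
    hcont (ContinuousLinearMap.isOpen_injective.mem_nhds hinj₀)
  have hformula : ∀ᶠ x in 𝓝[s] x₀, (S x).range.starProjection =
      h x ∘L Ring.inverse ((h x)† ∘L h x) ∘L (h x)† := by
    filter_upwards [hinj, self_mem_nhdsWithin] with x hx hxs
    have hrange : (h x).range = (S x).range := by
      refine Submodule.eq_of_le_of_finrank_eq (LinearMap.range_comp_le_range _ _) ?_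
      rw [LinearMap.finrank_range_of_inj hx, hd x hxs, hU]
    convert ContinuousLinearMap.starProjection_range hx using 2
    exact hrange.symm
  have hadj : ContinuousWithinAt (fun x => (h x)†) s x₀ :=
    ContinuousLinearMap.adjoint.continuous.continuousAt.comp_continuousWithinAt hcont
  have hinv : ContinuousWithinAt (fun x => Ring.inverse ((h x)† ∘L h x)) s x₀ :=
    (hadj.clm_comp hcont).ringInverse (ContinuousLinearMap.isUnit_adjoint_comp_self hinj₀)
  exact (hcont.clm_comp (hinv.clm_comp hadj)).congr_of_eventuallyEq hformula
    (hformula.self_of_nhdsWithin hx₀)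

theorem ContinuousOn.starProjection_map {h : X → E →L[𝕜] F} (hh : ContinuousOn h s)
    {U : X → Submodule 𝕜 E} (hU : ContinuousOn (fun x => (U x).starProjection) s)
    (hd : ∀ x ∈ s, finrank 𝕜 ((U x).map (h x : E →ₗ[𝕜] F)) = d) :
    ContinuousOn (fun x => ((U x).map (h x : E →ₗ[𝕜] F)).starProjection) s := by
  have hrange (x : X) : (h x ∘L (U x).starProjection).range = (U x).map (h x : E →ₗ[𝕜] F) := by
    rw [ContinuousLinearMap.toLinearMap_comp, LinearMap.range_comp,
      Submodule.range_starProjection]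
  simpa only [hrange] using
    (hh.clm_comp hU).starProjection_range (d := d) (fun x hx => by rw [hrange]; exact hd x hx)

theorem ContinuousOn.starProjection_sup {U U' : X → Submodule 𝕜 E}
    (hU : ContinuousOn (fun x => (U x).starProjection) s)
    (hU' : ContinuousOn (fun x => (U' x).starProjection) s)
    (hd : ∀ x ∈ s, finrank 𝕜 ↥(U x ⊔ U' x) = d) :
    ContinuousOn (fun x => (U x ⊔ U' x).starProjection) s := by
  simpa only [Submodule.range_starProjection_add_starProjection] using
    (show ContinuousOn (fun x => (U x).starProjection + (U' x).starProjection) s from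
      hU.add hU').starProjection_range (d := d)
      (fun x hx => by rw [Submodule.range_starProjection_add_starProjection]; exact hd x hx)

variable [FiniteDimensional 𝕜 F]

/-- The comap along an injective `h` is the image under its left inverse `(h† h)⁻¹ h†`. -/
theorem ContinuousOn.starProjection_comap {h : X → E →L[𝕜] F} (hh : ContinuousOn h s)
    (hinj : ∀ x ∈ s, Function.Injective (h x)) {U : X → Submodule 𝕜 F}
    (hUh : ∀ x ∈ s, U x ≤ (h x).range)
    (hU : ContinuousOn (fun x => (U x).starProjection) s) (hd : ∀ x ∈ s, finrank 𝕜 (U x) = d) :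
    ContinuousOn (fun x => ((U x).comap (h x : E →ₗ[𝕜] F)).starProjection) s := by
  let r : X → F →L[𝕜] E := fun x => Ring.inverse ((h x)† ∘L h x) ∘L (h x)†
  have hr : ∀ x ∈ s, Function.LeftInverse (r x) (h x) := fun x hx y => by
    rw [← ContinuousLinearMap.comp_apply, ContinuousLinearMap.comp_assoc,
      ← ContinuousLinearMap.mul_def,
      Ring.inverse_mul_cancel _ (ContinuousLinearMap.isUnit_adjoint_comp_self (hinj x hx))]
    rfl
  have hmap : ∀ x ∈ s, (U x).map (r x : F →ₗ[𝕜] E) = (U x).comap (h x : E →ₗ[𝕜] F) :=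
    fun x hx => Submodule.map_eq_comap_of_leftInverse (hr x hx) (hUh x hx)
  have hadj : ContinuousOn (fun x => (h x)†) s :=
    ContinuousLinearMap.adjoint.continuous.comp_continuousOn hh
  have hrc : ContinuousOn r s := fun x hx =>
    (((hadj x hx).clm_comp (hh x hx)).ringInverse
      (ContinuousLinearMap.isUnit_adjoint_comp_self (hinj x hx))).clm_comp (hadj x hx)
  refine (hrc.starProjection_map hU (d := d) fun x hx => ?_).congr fun x hx => ?_
  · rw [hmap x hx, Submodule.finrank_comap_of_le_range (hinj x hx) (hUh x hx), hd x hx]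
  · simp only [hmap x hx]

end RangeProjection

namespace Gr

variable {k m n : ℕ}

theorem ext {V W : Gr k m} (h : V.1 = W.1) : V = W := Subtype.ext h

theorem eq_of_le {V W : Gr k m} (h : V.1 ≤ W.1) : V = W :=
  ext (Submodule.eq_of_le_of_finrank_eq h (V.2.trans W.2.symm))

theorem isInducing_starProjection : IsInducing fun V : Gr k m => V.1.starProjection := ⟨rfl⟩

theorem continuousOn_iff {X : Type*} [TopologicalSpace X] {f : X → Gr k m} {s : Set X} :
    ContinuousOn f s ↔ ContinuousOn (fun x => (f x).1.starProjection) s :=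
  isInducing_starProjection.continuousOn_iff

def map (f : Euc m →L[ℝ] Euc n) (hf : Function.Injective f) (V : Gr k m) : Gr k n :=
  ⟨V.1.map (f : Euc m →ₗ[ℝ] Euc n), (Submodule.finrank_map_of_injective hf _).trans V.2⟩

def comap (f : Euc m →L[ℝ] Euc n) (hf : Function.Injective f) (V : Gr k n)
    (hV : V.1 ≤ f.range) : Gr k m :=
  ⟨V.1.comap (f : Euc m →ₗ[ℝ] Euc n), (Submodule.finrank_comap_of_le_range hf hV).trans V.2⟩

theorem map_comap {f : Euc m →L[ℝ] Euc n} (hf : Function.Injective f) {V : Gr k n}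
    (hV : V.1 ≤ f.range) : (V.comap f hf hV).map f hf = V :=
  ext (Submodule.map_comap_eq_self hV)

theorem comap_map {f : Euc m →L[ℝ] Euc n} (hf : Function.Injective f) {V : Gr k m}
    (hV : (V.map f hf).1 ≤ f.range) : (V.map f hf).comap f hf hV = V :=
  ext (Submodule.comap_map_eq_of_injective hf _)

variable {X : Type*} [TopologicalSpace X] {s : Set X}

theorem continuousOn_map {h : X → Euc m →L[ℝ] Euc n} (hh : ContinuousOn h s)
    (hinj : ∀ x, Function.Injective (h x)) {V : X → Gr k m} (hV : ContinuousOn V s) :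
    ContinuousOn (fun x => (V x).map (h x) (hinj x)) s :=
  continuousOn_iff.mpr <|
    hh.starProjection_map (continuousOn_iff.mp hV) fun x _ => ((V x).map (h x) (hinj x)).2

theorem continuousOn_comap {h : X → Euc m →L[ℝ] Euc n} (hh : ContinuousOn h s)
    (hinj : ∀ x, Function.Injective (h x)) {V : X → Gr k n} (hV : ContinuousOn V s)
    (hVh : ∀ x, (V x).1 ≤ (h x).range) :
    ContinuousOn (fun x => (V x).comap (h x) (hinj x) (hVh x)) s :=
  continuousOn_iff.mpr <|
    hh.starProjection_comap (fun x _ => hinj x) (fun x _ => hVh x) (continuousOn_iff.mp hV)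
      fun x _ => (V x).2

def frame (V : Gr k m) : Euc k →L[ℝ] Euc m :=
  V.1.subtypeL ∘L (ContinuousLinearEquiv.ofFinrankEq (by rw [finrank_euclideanSpace_fin, V.2]) :
    Euc k ≃L[ℝ] V.1)

theorem frame_injective (V : Gr k m) : Function.Injective V.frame :=
  Subtype.val_injective.comp (ContinuousLinearEquiv.injective _)

theorem range_frame (V : Gr k m) : V.frame.range = V.1 := by
  simp [frame, LinearMap.range_comp]

/-- The domain of the standard affine chart of the Grassmannian around `b`. -/
def chartDomain (b : Gr k m) : Set (Gr k m) :=
  {V | Function.Injective (V.1.starProjection ∘L b.frame)}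

theorem isOpen_chartDomain (b : Gr k m) : IsOpen b.chartDomain :=
  ContinuousLinearMap.isOpen_injective.preimage
    (isInducing_starProjection.continuous.clm_comp continuous_const)

theorem mem_chartDomain_self (b : Gr k m) : b ∈ b.chartDomain := by
  have h : b.1.starProjection ∘L b.frame = b.frame := by
    ext1 x
    exact Submodule.starProjection_eq_self_iff.mpr (b.range_frame ▸ ⟨x, rfl⟩)
  show Function.Injective (b.1.starProjection ∘L b.frame)
  rw [h]
  exact b.frame_injective

open Classical in
/-- Off the chart domain this falls back to `V.frame`, so that it is an embedding onto `V` for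
every `V` and the local trivialization below is a global bijection. -/
def localFrame (b V : Gr k m) : Euc k →L[ℝ] Euc m :=
  if V ∈ b.chartDomain then V.1.starProjection ∘L b.frame else V.frame

theorem localFrame_injective (b V : Gr k m) : Function.Injective (b.localFrame V) := by
  unfold localFrame
  split_ifs with hV
  exacts [hV, V.frame_injective]

theorem range_localFrame (b V : Gr k m) : (b.localFrame V).range = V.1 := by
  refine Submodule.eq_of_le_of_finrank_eq ?_ ?_
  · unfold localFrame
    split_ifs
    · rintro _ ⟨x, rfl⟩
      exact V.1.starProjection_apply_mem _
    · exact V.range_frame.le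
  · rw [LinearMap.finrank_range_of_inj (b.localFrame_injective V), finrank_euclideanSpace_fin,
      V.2]

theorem continuousOn_localFrame (b : Gr k m) : ContinuousOn b.localFrame b.chartDomain :=
  (isInducing_starProjection.continuous.clm_comp continuous_const).continuousOn.congr
    fun _ hV => if_pos hV

end Gr

section GoodTriple

variable {m n : ℕ}

theorem goodTriple_map_iff {f : Euc m →L[ℝ] Euc n} (hf : Function.Injective f)
    {p : Gr 2 m × Gr 2 m × Gr 2 m} :
    GoodTriple (p.1.map f hf, p.2.1.map f hf, p.2.2.map f hf) ↔ GoodTriple p := by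
  have hfinrank (A B : Gr 2 m) :
      finrank ℝ ↥((A.map f hf).1 ⊓ (B.map f hf).1) = finrank ℝ ↥(A.1 ⊓ B.1) := by
    show finrank ℝ ↥(A.1.map (f : Euc m →ₗ[ℝ] Euc n) ⊓ B.1.map (f : Euc m →ₗ[ℝ] Euc n)) = _
    rw [← Submodule.map_inf _ hf, Submodule.finrank_map_of_injective hf]
  unfold GoodTriple
  dsimp only
  rw [hfinrank, hfinrank, hfinrank]
  simp only [Gr.map, ← Submodule.map_inf _ hf, (Submodule.map_injective_of_injective hf).ne_iff]

theorem GoodTriple.finrank_sup {p : Gr 2 m × Gr 2 m × Gr 2 m} (hp : GoodTriple p) :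
    finrank ℝ ↥(p.1.1 ⊔ p.2.1.1) = 3 := by
  have := Submodule.finrank_sup_add_finrank_inf_eq p.1.1 p.2.1.1
  rw [p.1.2, p.2.1.2, hp.1] at this
  omega

theorem GoodTriple.le_sup {p : Gr 2 m × Gr 2 m × Gr 2 m} (hp : GoodTriple p) :
    p.2.2.1 ≤ p.1.1 ⊔ p.2.1.1 := by
  obtain ⟨-, h₁, h₂, -, -, hne⟩ := hp
  rw [← Submodule.sup_eq_of_finrank_eq_one h₁ h₂ hne inf_le_right inf_le_right p.2.2.2]
  exact sup_le_sup inf_le_left inf_le_left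

end GoodTriple

namespace Triples

variable {m n : ℕ}

theorem continuous_line₁ : Continuous fun t : Triples m => t.1.1 :=
  continuous_fst.comp continuous_subtype_val

theorem continuous_line₂ : Continuous fun t : Triples m => t.1.2.1 :=
  (continuous_fst.comp continuous_snd).comp continuous_subtype_val

theorem continuous_line₃ : Continuous fun t : Triples m => t.1.2.2 :=
  (continuous_snd.comp continuous_snd).comp continuous_subtype_val

theorem continuousOn_of_lines {X : Type*} [TopologicalSpace X] {s : Set X} {f : X → Triples m}
    (h₁ : ContinuousOn (fun x => (f x).1.1) s) (h₂ : ContinuousOn (fun x => (f x).1.2.1) s)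
    (h₃ : ContinuousOn (fun x => (f x).1.2.2) s) : ContinuousOn f s :=
  IsInducing.subtypeVal.continuousOn_iff.mpr (h₁.prodMk (h₂.prodMk h₃))

theorem sup_eq (t : Triples m) : t.1.1.1 ⊔ t.1.2.1.1 ⊔ t.1.2.2.1 = t.1.1.1 ⊔ t.1.2.1.1 :=
  sup_eq_left.mpr t.2.le_sup

def span (t : Triples m) : Gr 3 m :=
  ⟨t.1.1.1 ⊔ t.1.2.1.1 ⊔ t.1.2.2.1, by rw [t.sup_eq]; exact t.2.finrank_sup⟩

theorem le_span₁ (t : Triples m) : t.1.1.1 ≤ t.span.1 := le_sup_left.trans le_sup_left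

theorem le_span₂ (t : Triples m) : t.1.2.1.1 ≤ t.span.1 := le_sup_right.trans le_sup_left

theorem le_span₃ (t : Triples m) : t.1.2.2.1 ≤ t.span.1 := le_sup_right

theorem continuous_span : Continuous (span (m := m)) := by
  have hline (i : Triples m → Gr 2 m) (hi : Continuous i) :
      ContinuousOn (fun t => (i t).1.starProjection) Set.univ :=
    Gr.continuousOn_iff.mp hi.continuousOn
  rw [← continuousOn_univ, Gr.continuousOn_iff]
  exact ((hline _ continuous_line₁).starProjection_sup (hline _ continuous_line₂)
    fun t _ => t.2.finrank_sup).starProjection_sup (hline _ continuous_line₃) fun t _ => t.span.2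

def map (f : Euc m →L[ℝ] Euc n) (hf : Function.Injective f) (t : Triples m) : Triples n :=
  ⟨(t.1.1.map f hf, t.1.2.1.map f hf, t.1.2.2.map f hf), (goodTriple_map_iff hf).mpr t.2⟩

def comap (f : Euc m →L[ℝ] Euc n) (hf : Function.Injective f) (t : Triples n)
    (ht : t.span.1 ≤ f.range) : Triples m :=
  ⟨(t.1.1.comap f hf (t.le_span₁.trans ht), t.1.2.1.comap f hf (t.le_span₂.trans ht),
    t.1.2.2.comap f hf (t.le_span₃.trans ht)),
    (goodTriple_map_iff hf).mp <| by
      convert t.2 using 1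
      exact Prod.ext (Gr.map_comap hf (t.le_span₁.trans ht))
        (Prod.ext (Gr.map_comap hf (t.le_span₂.trans ht))
          (Gr.map_comap hf (t.le_span₃.trans ht)))⟩

theorem span_map (f : Euc m →L[ℝ] Euc n) (hf : Function.Injective f) (t : Triples m) :
    (t.map f hf).span = t.span.map f hf :=
  Gr.ext (by simp only [span, map, Gr.map, Submodule.map_sup])

theorem map_comap {f : Euc m →L[ℝ] Euc n} (hf : Function.Injective f) {t : Triples n}
    (ht : t.span.1 ≤ f.range) : (t.comap f hf ht).map f hf = t :=
  Subtype.ext (Prod.ext (Gr.map_comap hf (t.le_span₁.trans ht))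
    (Prod.ext (Gr.map_comap hf (t.le_span₂.trans ht)) (Gr.map_comap hf (t.le_span₃.trans ht))))

theorem comap_map {f g : Euc m →L[ℝ] Euc n} (hf : Function.Injective f)
    (hg : Function.Injective g) (hfg : f = g) {t : Triples m}
    (ht : (t.map f hf).span.1 ≤ g.range) : (t.map f hf).comap g hg ht = t := by
  subst hfg
  exact Subtype.ext (Prod.ext (Gr.comap_map hf ((le_span₁ _).trans ht))
    (Prod.ext (Gr.comap_map hf ((le_span₂ _).trans ht)) (Gr.comap_map hf ((le_span₃ _).trans ht))))

variable {X : Type*} [TopologicalSpace X] {s : Set X}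

theorem continuousOn_map {h : X → Euc m →L[ℝ] Euc n} (hh : ContinuousOn h s)
    (hinj : ∀ x, Function.Injective (h x)) {t : X → Triples m} (ht : ContinuousOn t s) :
    ContinuousOn (fun x => (t x).map (h x) (hinj x)) s :=
  continuousOn_of_lines (Gr.continuousOn_map hh hinj (continuous_line₁.comp_continuousOn ht))
    (Gr.continuousOn_map hh hinj (continuous_line₂.comp_continuousOn ht))
    (Gr.continuousOn_map hh hinj (continuous_line₃.comp_continuousOn ht))

theorem continuousOn_comap {h : X → Euc m →L[ℝ] Euc n} (hh : ContinuousOn h s)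
    (hinj : ∀ x, Function.Injective (h x)) {t : X → Triples n} (ht : ContinuousOn t s)
    (hth : ∀ x, (t x).span.1 ≤ (h x).range) :
    ContinuousOn (fun x => (t x).comap (h x) (hinj x) (hth x)) s :=
  continuousOn_of_lines
    (Gr.continuousOn_comap hh hinj (continuous_line₁.comp_continuousOn ht)
      fun x => (t x).le_span₁.trans (hth x))
    (Gr.continuousOn_comap hh hinj (continuous_line₂.comp_continuousOn ht)
      fun x => (t x).le_span₂.trans (hth x))
    (Gr.continuousOn_comap hh hinj (continuous_line₃.comp_continuousOn ht)
      fun x => (t x).le_span₃.trans (hth x))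

theorem span_map_localFrame (b V : Gr 3 m) (q : Triples 3) :
    (q.map (b.localFrame V) (b.localFrame_injective V)).span = V := by
  rw [span_map]
  exact Gr.eq_of_le ((LinearMap.map_le_range).trans (b.range_localFrame V).le)

def localTrivialization (b : Gr 3 m) : Bundle.Trivialization (Triples 3) (span (m := m)) where
  toFun t := (t.span, t.comap (b.localFrame t.span) (b.localFrame_injective _)
    (b.range_localFrame _).ge)
  invFun p := p.2.map (b.localFrame p.1) (b.localFrame_injective _)
  source := span ⁻¹' b.chartDomain
  target := b.chartDomain ×ˢ Set.univ
  map_source' _ ht := ⟨ht, trivial⟩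
  map_target' p hp := by
    rw [Set.mem_preimage, span_map_localFrame]
    exact hp.1
  left_inv' t _ := map_comap _ (b.range_localFrame _).ge
  right_inv' p _ := Prod.ext (span_map_localFrame b p.1 p.2)
    (comap_map _ _ (congrArg b.localFrame (span_map_localFrame b p.1 p.2).symm)
      (b.range_localFrame _).ge)
  open_source := b.isOpen_chartDomain.preimage continuous_span
  open_target := b.isOpen_chartDomain.prod isOpen_univ
  continuousOn_toFun := continuous_span.continuousOn.prodMk <|
    continuousOn_comap (b.continuousOn_localFrame.comp continuous_span.continuousOn fun _ ht => ht)
      _ continuousOn_id _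
  continuousOn_invFun := continuousOn_map
    (b.continuousOn_localFrame.comp continuous_fst.continuousOn fun _ hp => hp.1) _
    continuous_snd.continuousOn
  baseSet := b.chartDomain
  open_baseSet := b.isOpen_chartDomain
  source_eq := rfl
  target_eq := rfl
  proj_toFun _ _ := rfl

end Triples

theorem stmt8 :
    ∃ π : Triples 4 → Gr 3 4, Continuous π ∧
      (∀ p : Triples 4, (π p).1 = p.1.1.1 ⊔ p.1.2.1.1 ⊔ p.1.2.2.1) ∧
      ∀ b : Gr 3 4, ∃ e : Bundle.Trivialization (Triples 3) π, b ∈ e.baseSet :=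
  ⟨Triples.span, Triples.continuous_span, fun _ => rfl,
    fun b => ⟨Triples.localTrivialization b, b.mem_chartDomain_self⟩⟩

end
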